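/- arXiv:2603.20996 — 3 statements merged into one kernel-verified Lean document; each statement's English description precedes it below -/
import Mathlib

section
/- Bound on Volterra integrals (drift case): Let f : [0,T] → ℝ≥0 be Borel, locally bounded, and non-decreasing, and let K₁ satisfy sup_{t∈[0,T]} ∫₀ᵗ K₁(t,s)^{2β/(β+1)} ds < ∞ for some β > 1. Then for every a > 0, with ρ = (β+1)/(2β) ∈ (0,1), for all t ∈ [0,T]: ∫₀ᵗ K₁(t,s) f(s) ds ≤ φ(t) ( ρ·f(t)/a^{1/ρ} + (1−ρ)·a^{1/(1−ρ)} ∫₀ᵗ f(s) ds ), where φ(t) = (∫₀ᵗ K₁(t,s)^{2β/(β+1)} ds)^{(β+1)/(2β)}. -/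
open MeasureTheory Set

/-!
Since `f` is non-decreasing and non-negative, `f s ≤ f t ^ ρ * f s ^ (1 - ρ)` on `(0, t]`. Hölder's
inequality with the conjugate exponents `1/ρ = 2β/(β+1)` and `1/(1-ρ)` then bounds the Volterra
integral by `φ(t) * f t ^ ρ * (∫₀ᵗ f) ^ (1 - ρ)`, and Young's inequality, with the weight `a` moved
between the two factors, splits the product into the stated sum.
-/

namespace ENNReal

theorem le_rpow_mul_rpow_one_sub_of_le {x M : ℝ≥0∞} {ρ : ℝ} (hρ0 : 0 ≤ ρ) (hρ1 : ρ ≤ 1)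
    (hxM : x ≤ M) :
    x ≤ M ^ ρ * x ^ (1 - ρ) :=
  calc x = x ^ ρ * x ^ (1 - ρ) := by
        rw [← rpow_add_of_nonneg _ _ hρ0 (sub_nonneg.2 hρ1), add_sub_cancel, rpow_one]
    _ ≤ M ^ ρ * x ^ (1 - ρ) := by gcongr

variable {α : Type*} [MeasurableSpace α] {μ : Measure α}

theorem lintegral_mul_le_of_ae_le_const {k g : α → ℝ≥0∞} {M : ℝ≥0∞} {ρ : ℝ} (hρ0 : 0 < ρ)
    (hρ1 : ρ < 1) (hk : AEMeasurable k μ) (hg : AEMeasurable g μ) (hgM : ∀ᵐ x ∂μ, g x ≤ M) :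
    ∫⁻ x, k x * g x ∂μ ≤
      M ^ ρ * ((∫⁻ x, k x ^ (1 / ρ) ∂μ) ^ ρ * (∫⁻ x, g x ∂μ) ^ (1 - ρ)) := by
  have hpq : (1 / ρ).HolderConjugate (1 / (1 - ρ)) :=
    Real.holderConjugate_one_div hρ0 (by linarith) (by ring)
  have hg_pow : ∀ x, (g x ^ (1 - ρ)) ^ (1 / (1 - ρ)) = g x := fun x => by
    rw [← rpow_mul, mul_one_div_cancel (by linarith), rpow_one]
  calc ∫⁻ x, k x * g x ∂μ ≤ ∫⁻ x, M ^ ρ * (k x * g x ^ (1 - ρ)) ∂μ := by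
        refine lintegral_mono_ae (hgM.mono fun x hx => ?_)
        calc k x * g x ≤ k x * (M ^ ρ * g x ^ (1 - ρ)) :=
              mul_le_mul_right (le_rpow_mul_rpow_one_sub_of_le hρ0.le hρ1.le hx) _
          _ = M ^ ρ * (k x * g x ^ (1 - ρ)) := by ring
    _ = M ^ ρ * ∫⁻ x, k x * g x ^ (1 - ρ) ∂μ :=
        lintegral_const_mul'' _ (hk.mul (hg.pow_const _))
    _ ≤ M ^ ρ * ((∫⁻ x, k x ^ (1 / ρ) ∂μ) ^ ρ * (∫⁻ x, g x ∂μ) ^ (1 - ρ)) := by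
        gcongr
        simpa only [Pi.mul_apply, hg_pow, one_div_one_div] using
          lintegral_mul_le_Lp_mul_Lq μ hpq hk (hg.pow_const (1 - ρ))

end ENNReal

namespace MeasureTheory

variable {α : Type*} [MeasurableSpace α] {μ : Measure α}

theorem integral_mul_le_of_ae_le_const {k g : α → ℝ} {M ρ : ℝ} (hρ0 : 0 < ρ) (hρ1 : ρ < 1)
    (hM : 0 ≤ M) (hk : 0 ≤ᵐ[μ] k) (hg : 0 ≤ᵐ[μ] g)
    (hkp : Integrable (fun x => k x ^ (1 / ρ)) μ) (hgi : Integrable g μ)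
    (hgM : ∀ᵐ x ∂μ, g x ≤ M) :
    ∫ x, k x * g x ∂μ ≤
      M ^ ρ * ((∫ x, k x ^ (1 / ρ) ∂μ) ^ ρ * (∫ x, g x ∂μ) ^ (1 - ρ)) := by
  have hk_meas : AEStronglyMeasurable k μ := by
    refine ((Real.continuous_rpow_const hρ0.le).comp_aestronglyMeasurable
      hkp.aestronglyMeasurable).congr ?_
    filter_upwards [hk] with x hx
    simp only [one_div, Real.rpow_inv_rpow hx hρ0.ne']
  have hkg : 0 ≤ᵐ[μ] fun x => k x * g x := by
    filter_upwards [hk, hg] with x hkx hgx using mul_nonneg hkx hgx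
  have hkp_nonneg : 0 ≤ᵐ[μ] fun x => k x ^ (1 / ρ) := by
    filter_upwards [hk] with x hx using Real.rpow_nonneg hx _
  have hK := integral_nonneg_of_ae hkp_nonneg
  have hG := integral_nonneg_of_ae hg
  rw [integral_eq_lintegral_of_nonneg_ae hkg (hk_meas.mul hgi.aestronglyMeasurable)]
  refine ENNReal.toReal_le_of_le_ofReal (by positivity) ?_
  calc ∫⁻ x, ENNReal.ofReal (k x * g x) ∂μ
      = ∫⁻ x, ENNReal.ofReal (k x) * ENNReal.ofReal (g x) ∂μ := by
        refine lintegral_congr_ae ?_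
        filter_upwards [hk] with x hx using ENNReal.ofReal_mul hx
    _ ≤ ENNReal.ofReal M ^ ρ * ((∫⁻ x, ENNReal.ofReal (k x) ^ (1 / ρ) ∂μ) ^ ρ *
          (∫⁻ x, ENNReal.ofReal (g x) ∂μ) ^ (1 - ρ)) :=
        ENNReal.lintegral_mul_le_of_ae_le_const hρ0 hρ1 hk_meas.aemeasurable.ennreal_ofReal
          hgi.aemeasurable.ennreal_ofReal (hgM.mono fun x hx => ENNReal.ofReal_le_ofReal hx)
    _ = ENNReal.ofReal (M ^ ρ * ((∫ x, k x ^ (1 / ρ) ∂μ) ^ ρ * (∫ x, g x ∂μ) ^ (1 - ρ))) := by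
        have hkp_lint : ∫⁻ x, ENNReal.ofReal (k x) ^ (1 / ρ) ∂μ
            = ENNReal.ofReal (∫ x, k x ^ (1 / ρ) ∂μ) := by
          rw [ofReal_integral_eq_lintegral_ofReal hkp hkp_nonneg]
          refine lintegral_congr_ae ?_
          filter_upwards [hk] with x hx using ENNReal.ofReal_rpow_of_nonneg hx (by positivity)
        rw [hkp_lint, ← ofReal_integral_eq_lintegral_ofReal hgi hg,
          ENNReal.ofReal_mul (by positivity), ENNReal.ofReal_mul (by positivity),
          ENNReal.ofReal_rpow_of_nonneg hM hρ0.le, ENNReal.ofReal_rpow_of_nonneg hK hρ0.le,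
          ENNReal.ofReal_rpow_of_nonneg hG (by linarith)]

end MeasureTheory

namespace Real

theorem rpow_mul_rpow_one_sub_le_young {x y a ρ : ℝ} (hx : 0 ≤ x) (hy : 0 ≤ y) (ha : 0 < a)
    (hρ0 : 0 < ρ) (hρ1 : ρ < 1) :
    x ^ ρ * y ^ (1 - ρ) ≤ ρ * x / a ^ (1 / ρ) + (1 - ρ) * a ^ (1 / (1 - ρ)) * y := by
  have hrescale : (x / a ^ (1 / ρ)) ^ ρ * (a ^ (1 / (1 - ρ)) * y) ^ (1 - ρ)
      = x ^ ρ * y ^ (1 - ρ) := by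
    rw [div_rpow hx (by positivity), mul_rpow (by positivity) hy, ← rpow_mul ha.le,
      ← rpow_mul ha.le, one_div_mul_cancel hρ0.ne', one_div_mul_cancel (by linarith),
      rpow_one]
    field_simp [ha.ne']
  calc x ^ ρ * y ^ (1 - ρ) = (x / a ^ (1 / ρ)) ^ ρ * (a ^ (1 / (1 - ρ)) * y) ^ (1 - ρ) :=
        hrescale.symm
    _ ≤ ρ * (x / a ^ (1 / ρ)) + (1 - ρ) * (a ^ (1 / (1 - ρ)) * y) :=
        geom_mean_le_arith_mean2_weighted hρ0.le (by linarith) (by positivity) (by positivity)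
          (by ring)
    _ = ρ * x / a ^ (1 / ρ) + (1 - ρ) * a ^ (1 / (1 - ρ)) * y := by ring

end Real

theorem volterra_integral_bound_drift_general
    (T β : ℝ) (hβ : 1 < β)
    (K₁ : ℝ → ℝ → ℝ) (hKnn : ∀ t s, 0 ≤ K₁ t s)
    (hKint : ∀ t ∈ Icc (0 : ℝ) T,
      IntegrableOn (fun s => K₁ t s ^ (2 * β / (β + 1))) (Ioc 0 t))
    (f : ℝ → ℝ) (hfnn : ∀ t, 0 ≤ f t)
    (hfint : IntegrableOn f (Icc 0 T))
    (hfmono : MonotoneOn f (Icc 0 T)) :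
    ∀ a : ℝ, 0 < a → ∀ t ∈ Icc (0 : ℝ) T,
      ∫ s in Ioc (0 : ℝ) t, K₁ t s * f s ≤
        (∫ s in Ioc (0 : ℝ) t, K₁ t s ^ (2 * β / (β + 1))) ^ ((β + 1) / (2 * β)) *
          (((β + 1) / (2 * β)) * f t / a ^ (1 / ((β + 1) / (2 * β)))
            + (1 - (β + 1) / (2 * β)) * a ^ (1 / (1 - (β + 1) / (2 * β)))
              * ∫ s in Ioc (0 : ℝ) t, f s) := by
  intro a ha t ht
  set ρ := (β + 1) / (2 * β)
  have hρ0 : 0 < ρ := by positivity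
  have hρ1 : ρ < 1 := (div_lt_one (by positivity)).2 (by linarith)
  have hp : 2 * β / (β + 1) = 1 / ρ := (one_div_div _ _).symm
  have hK := hKint t ht
  rw [hp] at hK ⊢
  have hsub : Ioc 0 t ⊆ Icc 0 T := fun s hs => ⟨hs.1.le, hs.2.trans ht.2⟩
  have hf_le : ∀ᵐ s ∂volume.restrict (Ioc 0 t), f s ≤ f t :=
    ae_restrict_of_forall_mem measurableSet_Ioc fun s hs => hfmono (hsub hs) ht hs.2
  calc ∫ s in Ioc 0 t, K₁ t s * f s
      ≤ f t ^ ρ * ((∫ s in Ioc 0 t, K₁ t s ^ (1 / ρ)) ^ ρ * (∫ s in Ioc 0 t, f s) ^ (1 - ρ)) :=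
        integral_mul_le_of_ae_le_const hρ0 hρ1 (hfnn t) (ae_of_all _ (hKnn t))
          (ae_of_all _ hfnn) hK (hfint.mono_set hsub) hf_le
    _ = (∫ s in Ioc 0 t, K₁ t s ^ (1 / ρ)) ^ ρ *
          (f t ^ ρ * (∫ s in Ioc 0 t, f s) ^ (1 - ρ)) := by
        ring
    _ ≤ _ := by
        refine mul_le_mul_of_nonneg_left ?_
          (Real.rpow_nonneg (integral_nonneg fun s => Real.rpow_nonneg (hKnn t s) _) _)
        exact Real.rpow_mul_rpow_one_sub_le_young (hfnn t) (integral_nonneg hfnn) ha hρ0 hρ1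

/-- Bound on Volterra integrals, drift case: for non-decreasing `f ≥ 0` and a kernel `K₁`
with `∫₀ᵗ K₁(t,s)^{2β/(β+1)} ds < ∞`, with `ρ = (β+1)/(2β)`, for every `a > 0`:
`∫₀ᵗ K₁(t,s) f(s) ds ≤ φ(t) (ρ f(t)/a^{1/ρ} + (1-ρ) a^{1/(1-ρ)} ∫₀ᵗ f(s) ds)`. -/
theorem volterra_integral_bound_drift
    (T β : ℝ) (hT : 0 < T) (hβ : 1 < β)
    (K₁ : ℝ → ℝ → ℝ) (hKnn : ∀ t s, 0 ≤ K₁ t s)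
    (hKmeas : ∀ t, Measurable (K₁ t))
    (hKint : ∀ t ∈ Icc (0 : ℝ) T,
      IntegrableOn (fun s => K₁ t s ^ (2 * β / (β + 1))) (Ioc 0 t))
    (f : ℝ → ℝ) (hfnn : ∀ t, 0 ≤ f t) (hfmeas : Measurable f)
    (hfint : IntegrableOn f (Icc 0 T))
    (hfmono : MonotoneOn f (Icc 0 T))
    (hKf : ∀ t ∈ Icc (0 : ℝ) T, IntegrableOn (fun s => K₁ t s * f s) (Ioc 0 t)) :
    ∀ a : ℝ, 0 < a → ∀ t ∈ Icc (0 : ℝ) T,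
      ∫ s in Ioc (0 : ℝ) t, K₁ t s * f s ≤
        (∫ s in Ioc (0 : ℝ) t, K₁ t s ^ (2 * β / (β + 1))) ^ ((β + 1) / (2 * β)) *
          (((β + 1) / (2 * β)) * f t / a ^ (1 / ((β + 1) / (2 * β)))
            + (1 - (β + 1) / (2 * β)) * a ^ (1 / (1 - (β + 1) / (2 * β)))
              * ∫ s in Ioc (0 : ℝ) t, f s) :=
  volterra_integral_bound_drift_general T β hβ K₁ hKnn hKint f hfnn hfint hfmono
end

section
/- Bound on Volterra integrals (diffusion case): Let f : [0,T] → ℝ≥0 be Borel, locally bounded, non-decreasing, and let K₂ satisfy sup_{t∈[0,T]} ∫₀ᵗ K₂(t,s)^{2β} ds < ∞ for some β > 1. Then for every a > 0, with ρ = (β+1)/(2β), for all t ∈ [0,T]: (∫₀ᵗ K₂(t,s)² f(s)² ds)^{1/2} ≤ ψ(t) ( ρ·f(t)/a^{1/ρ} + (1−ρ)·a^{1/(1−ρ)} ∫₀ᵗ f(s) ds ), where ψ(t) = (∫₀ᵗ K₂(t,s)^{2β} ds)^{1/(2β)}. -/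
/-!
Hölder's inequality with exponents `β` and `q = β/(β-1)` bounds the `L²` norm of `K₂(t,·) f` by
`ψ(t) ‖f‖_{L^{2q}(0,t)}`. Since `f ≤ f(t)` on `(0,t]`, `f^{2q} ≤ f(t)^{2q-1} f`, and as
`1/(2q) = 1 - ρ` this gives `‖f‖_{2q} ≤ f(t)^ρ (∫₀ᵗ f)^{1-ρ}`. Weighted AM-GM applied to
`f(t)/a^{1/ρ}` and `a^{1/(1-ρ)} ∫₀ᵗ f` splits this product into the stated sum.
-/

open MeasureTheory Set

theorem Real.rpow_le_rpow_sub_one_mul {x c r : ℝ} (hx : 0 ≤ x) (hxc : x ≤ c) (hr : 1 ≤ r) :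
    x ^ r ≤ c ^ (r - 1) * x := by
  calc x ^ r = x ^ (r - 1) * x := by rw [← Real.rpow_add_one' hx (by linarith), sub_add_cancel]
    _ ≤ c ^ (r - 1) * x := by gcongr

theorem Real.rpow_mul_rpow_one_sub_le {ρ a x y : ℝ} (hρ₀ : 0 < ρ) (hρ₁ : ρ < 1) (ha : 0 < a)
    (hx : 0 ≤ x) (hy : 0 ≤ y) :
    x ^ ρ * y ^ (1 - ρ) ≤ ρ * x / a ^ (1 / ρ) + (1 - ρ) * a ^ (1 / (1 - ρ)) * y := by
  have amgm := Real.geom_mean_le_arith_mean2_weighted (p₁ := x / a ^ (1 / ρ))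
    (p₂ := a ^ (1 / (1 - ρ)) * y) hρ₀.le (sub_nonneg.2 hρ₁.le) (by positivity) (by positivity)
    (add_sub_cancel ρ 1)
  rw [Real.div_rpow hx (by positivity), Real.mul_rpow (by positivity) hy, ← Real.rpow_mul ha.le,
    ← Real.rpow_mul ha.le, one_div_mul_cancel hρ₀.ne', one_div_mul_cancel (by linarith),
    Real.rpow_one] at amgm
  calc x ^ ρ * y ^ (1 - ρ) = x ^ ρ / a * (a * y ^ (1 - ρ)) := by field_simp
    _ ≤ ρ * (x / a ^ (1 / ρ)) + (1 - ρ) * (a ^ (1 / (1 - ρ)) * y) := amgm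
    _ = ρ * x / a ^ (1 / ρ) + (1 - ρ) * a ^ (1 / (1 - ρ)) * y := by ring

section

variable {α : Type*} [MeasurableSpace α] {μ : Measure α}

theorem memLp_ofReal_of_integrable_rpow {p : ℝ} (hp : 0 < p) {g : α → ℝ} (hg : 0 ≤ g)
    (hgm : AEStronglyMeasurable g μ) (hgi : Integrable (fun x => g x ^ p) μ) :
    MemLp g (ENNReal.ofReal p) μ := by
  rw [← integrable_norm_rpow_iff hgm (by simpa using hp) ENNReal.ofReal_ne_top]
  simpa only [ENNReal.toReal_ofReal hp.le, Real.norm_of_nonneg (hg _)] using hgi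

theorem integral_sq_mul_sq_rpow_half_le {p q : ℝ} (hpq : p.HolderConjugate q) {g h : α → ℝ}
    (hg : 0 ≤ g) (hh : 0 ≤ h) (hgm : AEStronglyMeasurable g μ) (hhm : AEStronglyMeasurable h μ)
    (hgi : Integrable (fun x => g x ^ (2 * p)) μ) (hhi : Integrable (fun x => h x ^ (2 * q)) μ) :
    (∫ x, g x ^ 2 * h x ^ 2 ∂μ) ^ (1 / 2 : ℝ) ≤
      (∫ x, g x ^ (2 * p) ∂μ) ^ (1 / (2 * p)) * (∫ x, h x ^ (2 * q) ∂μ) ^ (1 / (2 * q)) := by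
  have sq_rpow {u : α → ℝ} (hu : 0 ≤ u) (r : ℝ) :
      (fun x => (u x ^ 2) ^ r) = fun x => u x ^ (2 * r) := by
    ext x; rw [← Real.rpow_natCast_mul (hu x)]; norm_num
  have hg2 : MemLp (fun x => g x ^ 2) (ENNReal.ofReal p) μ :=
    memLp_ofReal_of_integrable_rpow hpq.pos (fun x => sq_nonneg _) (hgm.pow 2)
      (by rwa [sq_rpow hg])
  have hh2 : MemLp (fun x => h x ^ 2) (ENNReal.ofReal q) μ :=
    memLp_ofReal_of_integrable_rpow hpq.symm.pos (fun x => sq_nonneg _) (hhm.pow 2)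
      (by rwa [sq_rpow hh])
  have holder := integral_mul_le_Lp_mul_Lq_of_nonneg hpq
    (.of_forall fun x => sq_nonneg (g x)) (.of_forall fun x => sq_nonneg (h x)) hg2 hh2
  rw [sq_rpow hg, sq_rpow hh] at holder
  have hG : 0 ≤ ∫ x, g x ^ (2 * p) ∂μ := integral_nonneg fun x => Real.rpow_nonneg (hg x) _
  have hH : 0 ≤ ∫ x, h x ^ (2 * q) ∂μ := integral_nonneg fun x => Real.rpow_nonneg (hh x) _
  calc (∫ x, g x ^ 2 * h x ^ 2 ∂μ) ^ (1 / 2 : ℝ)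
      ≤ ((∫ x, g x ^ (2 * p) ∂μ) ^ (1 / p) * (∫ x, h x ^ (2 * q) ∂μ) ^ (1 / q)) ^ (1 / 2 : ℝ) :=
        Real.rpow_le_rpow (integral_nonneg fun x => by positivity) holder (by norm_num)
    _ = _ := by
      rw [Real.mul_rpow (by positivity) (by positivity), ← Real.rpow_mul hG, ← Real.rpow_mul hH]
      congr 2 <;> field_simp

theorem integrable_rpow_of_ae_le {f : α → ℝ} {c r : ℝ} (hf : 0 ≤ f) (hfc : ∀ᵐ x ∂μ, f x ≤ c)
    (hr : 1 ≤ r) (hfi : Integrable f μ) : Integrable (fun x => f x ^ r) μ := by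
  refine (hfi.const_mul (c ^ (r - 1))).mono'
    (hfi.1.aemeasurable.pow_const r).aestronglyMeasurable ?_
  filter_upwards [hfc] with x hx
  rw [Real.norm_of_nonneg (Real.rpow_nonneg (hf x) r)]
  exact Real.rpow_le_rpow_sub_one_mul (hf x) hx hr

theorem integral_rpow_le_of_ae_le {f : α → ℝ} {c r : ℝ} (hf : 0 ≤ f) (hfc : ∀ᵐ x ∂μ, f x ≤ c)
    (hr : 1 ≤ r) (hfi : Integrable f μ) :
    ∫ x, f x ^ r ∂μ ≤ c ^ (r - 1) * ∫ x, f x ∂μ := by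
  rw [← integral_const_mul]
  refine integral_mono_ae (integrable_rpow_of_ae_le hf hfc hr hfi) (hfi.const_mul _) ?_
  filter_upwards [hfc] with x hx
  exact Real.rpow_le_rpow_sub_one_mul (hf x) hx hr

theorem integral_sq_mul_sq_rpow_half_le_of_ae_le {β c : ℝ} (hβ : 1 < β) {g h : α → ℝ}
    (hg : 0 ≤ g) (hh : 0 ≤ h) (hgm : AEStronglyMeasurable g μ)
    (hgi : Integrable (fun x => g x ^ (2 * β)) μ) (hhi : Integrable h μ) (hc : 0 ≤ c)
    (hhc : ∀ᵐ x ∂μ, h x ≤ c) :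
    (∫ x, g x ^ 2 * h x ^ 2 ∂μ) ^ (1 / 2 : ℝ) ≤ (∫ x, g x ^ (2 * β) ∂μ) ^ (1 / (2 * β)) *
      (c ^ ((β + 1) / (2 * β)) * (∫ x, h x ∂μ) ^ (1 - (β + 1) / (2 * β))) := by
  set q := Real.conjExponent β
  have hpq : β.HolderConjugate q := .conjExponent hβ
  have h2q : 1 ≤ 2 * q := by linarith [hpq.symm.lt]
  have hq : 1 / (2 * q) = 1 - (β + 1) / (2 * β) := by
    have : β - 1 ≠ 0 := by linarith
    simp only [q, Real.conjExponent]
    field_simp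
    ring
  have hψ : 0 ≤ (∫ x, g x ^ (2 * β) ∂μ) ^ (1 / (2 * β)) :=
    Real.rpow_nonneg (integral_nonneg fun x => Real.rpow_nonneg (hg x) _) _
  calc _ ≤ (∫ x, g x ^ (2 * β) ∂μ) ^ (1 / (2 * β)) * (∫ x, h x ^ (2 * q) ∂μ) ^ (1 / (2 * q)) :=
        integral_sq_mul_sq_rpow_half_le hpq hg hh hgm hhi.1 hgi
          (integrable_rpow_of_ae_le hh hhc h2q hhi)
    _ ≤ (∫ x, g x ^ (2 * β) ∂μ) ^ (1 / (2 * β)) *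
          (c ^ (2 * q - 1) * ∫ x, h x ∂μ) ^ (1 / (2 * q)) := by
        gcongr
        · exact integral_nonneg fun x => Real.rpow_nonneg (hh x) _
        · exact integral_rpow_le_of_ae_le hh hhc h2q hhi
    _ = _ := by
        rw [Real.mul_rpow (Real.rpow_nonneg hc _) (integral_nonneg hh), ← Real.rpow_mul hc, hq]
        congr 3
        have : q ≠ 0 := hpq.symm.pos.ne'
        rw [show (β + 1) / (2 * β) = 1 - 1 / (2 * q) by linarith]
        field_simp
        ring

end

theorem volterra_integral_bound_diffusion_general
    (T β : ℝ) (hβ : 1 < β)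
    (K₂ : ℝ → ℝ → ℝ) (hKnn : ∀ t s, 0 ≤ K₂ t s)
    (hKmeas : ∀ t, Measurable (K₂ t))
    (hKint : ∀ t ∈ Icc (0 : ℝ) T,
      IntegrableOn (fun s => K₂ t s ^ (2 * β)) (Ioc 0 t))
    (f : ℝ → ℝ) (hfnn : ∀ t, 0 ≤ f t)
    (hfint : IntegrableOn f (Icc 0 T))
    (hfmono : MonotoneOn f (Icc 0 T)) :
    ∀ a : ℝ, 0 < a → ∀ t ∈ Icc (0 : ℝ) T,
      (∫ s in Ioc (0 : ℝ) t, K₂ t s ^ (2 : ℕ) * f s ^ (2 : ℕ)) ^ ((1 : ℝ) / 2) ≤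
        (∫ s in Ioc (0 : ℝ) t, K₂ t s ^ (2 * β)) ^ (1 / (2 * β)) *
          (((β + 1) / (2 * β)) * f t / a ^ (1 / ((β + 1) / (2 * β)))
            + (1 - (β + 1) / (2 * β)) * a ^ (1 / (1 - (β + 1) / (2 * β)))
              * ∫ s in Ioc (0 : ℝ) t, f s) := by
  intro a ha t ht
  have hsub : Ioc 0 t ⊆ Icc 0 T := fun s hs => ⟨hs.1.le, hs.2.trans ht.2⟩
  have hfle : ∀ᵐ s ∂volume.restrict (Ioc 0 t), f s ≤ f t :=
    ae_restrict_of_forall_mem measurableSet_Ioc fun s hs => hfmono (hsub hs) ht hs.2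
  have hρ₀ : 0 < (β + 1) / (2 * β) := by positivity
  have hρ₁ : (β + 1) / (2 * β) < 1 := by rw [div_lt_one (by positivity)]; linarith
  have hψ : 0 ≤ (∫ s in Ioc 0 t, K₂ t s ^ (2 * β)) ^ (1 / (2 * β)) :=
    Real.rpow_nonneg (integral_nonneg fun s => Real.rpow_nonneg (hKnn t s) _) _
  calc _ ≤ (∫ s in Ioc 0 t, K₂ t s ^ (2 * β)) ^ (1 / (2 * β)) *
          (f t ^ ((β + 1) / (2 * β)) * (∫ s in Ioc 0 t, f s) ^ (1 - (β + 1) / (2 * β))) :=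
        integral_sq_mul_sq_rpow_half_le_of_ae_le hβ (hKnn t) hfnn (hKmeas t).aestronglyMeasurable
          (hKint t ht) (hfint.mono_set hsub) (hfnn t) hfle
    _ ≤ _ := mul_le_mul_of_nonneg_left (Real.rpow_mul_rpow_one_sub_le hρ₀ hρ₁ ha (hfnn t)
          (integral_nonneg hfnn)) hψ

/-- Bound on Volterra integrals, diffusion case: for non-decreasing `f ≥ 0` and a kernel `K₂`
with `∫₀ᵗ K₂(t,s)^{2β} ds < ∞`, with `ρ = (β+1)/(2β)`, for every `a > 0`:
`(∫₀ᵗ K₂(t,s)² f(s)² ds)^{1/2} ≤ ψ(t)(ρ f(t)/a^{1/ρ} + (1-ρ) a^{1/(1-ρ)} ∫₀ᵗ f(s) ds)`. -/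
theorem volterra_integral_bound_diffusion
    (T β : ℝ) (hT : 0 < T) (hβ : 1 < β)
    (K₂ : ℝ → ℝ → ℝ) (hKnn : ∀ t s, 0 ≤ K₂ t s)
    (hKmeas : ∀ t, Measurable (K₂ t))
    (hKint : ∀ t ∈ Icc (0 : ℝ) T,
      IntegrableOn (fun s => K₂ t s ^ (2 * β)) (Ioc 0 t))
    (f : ℝ → ℝ) (hfnn : ∀ t, 0 ≤ f t) (hfmeas : Measurable f)
    (hfint : IntegrableOn f (Icc 0 T))
    (hfmono : MonotoneOn f (Icc 0 T))
    (hKf : ∀ t ∈ Icc (0 : ℝ) T,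
      IntegrableOn (fun s => K₂ t s ^ (2 : ℕ) * f s ^ (2 : ℕ)) (Ioc 0 t)) :
    ∀ a : ℝ, 0 < a → ∀ t ∈ Icc (0 : ℝ) T,
      (∫ s in Ioc (0 : ℝ) t, K₂ t s ^ (2 : ℕ) * f s ^ (2 : ℕ)) ^ ((1 : ℝ) / 2) ≤
        (∫ s in Ioc (0 : ℝ) t, K₂ t s ^ (2 * β)) ^ (1 / (2 * β)) *
          (((β + 1) / (2 * β)) * f t / a ^ (1 / ((β + 1) / (2 * β)))
            + (1 - (β + 1) / (2 * β)) * a ^ (1 / (1 - (β + 1) / (2 * β)))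
              * ∫ s in Ioc (0 : ℝ) t, f s) :=
  volterra_integral_bound_diffusion_general T β hβ K₂ hKnn hKmeas hKint f hfnn hfint hfmono
end

section
/- Hölder continuity of the fractional kernel integral in the first variable: for K_α(u) = u^{α−1}/Γ(α) with α ∈ (1/2, 1], there is a constant κ such that for all δ ∈ (0,T) and all t ∈ [0,T], (∫₀ᵗ |K_α(t+δ−s) − K_α(t−s)|² ds)^{1/2} ≤ κ δ^{α−1/2}. -/
open MeasureTheory Set

/-! After the substitution `x = t - s`, write `a = (x+δ)^(α-1) ≤ b = x^(α-1)`: the elementary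
bound `(b - a)² ≤ b² - a²` turns the square of the kernel increment into the difference of powers
`x^(2α-2) - (x+δ)^(2α-2)`, whose integral over `(0, t]` telescopes to
`(t^(2α-1) + δ^(2α-1) - (t+δ)^(2α-1)) / (2α-1) ≤ δ^(2α-1) / (2α-1)`. -/

lemma sq_sub_le_sq_sub_sq {a b : ℝ} (hb : 0 ≤ b) (hba : b ≤ a) : (a - b) ^ 2 ≤ a ^ 2 - b ^ 2 := by
  nlinarith

lemma sq_rpow_add_sub_rpow_le {p x δ : ℝ} (hp : p ≤ 0) (hx : 0 < x) (hδ : 0 ≤ δ) :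
    ((x + δ) ^ p - x ^ p) ^ 2 ≤ x ^ (2 * p) - (x + δ) ^ (2 * p) := by
  have hxδ : 0 < x + δ := by linarith
  rw [mul_comm, Real.rpow_mul hx.le, Real.rpow_mul hxδ.le, Real.rpow_two, Real.rpow_two,
    ← neg_sub, neg_sq]
  exact sq_sub_le_sq_sub_sq (by positivity) (Real.rpow_le_rpow_of_nonpos hx (by linarith) hp)

lemma intervalIntegrable_rpow_add {p : ℝ} (hp : -1 < p) (δ a b : ℝ) :
    IntervalIntegrable (fun x => (x + δ) ^ p) volume a b := by
  simpa using
    (intervalIntegral.intervalIntegrable_rpow' hp (a := a + δ) (b := b + δ)).comp_add_right δ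

lemma integral_rpow_sub_rpow_add {p t δ : ℝ} (hp : -1 < p) :
    ∫ x in (0 : ℝ)..t, (x ^ p - (x + δ) ^ p)
      = (t ^ (p + 1) + δ ^ (p + 1) - (t + δ) ^ (p + 1)) / (p + 1) := by
  have hp0 : p + 1 ≠ 0 := by linarith
  rw [intervalIntegral.integral_sub (intervalIntegral.intervalIntegrable_rpow' hp)
      (intervalIntegrable_rpow_add hp δ 0 t),
    intervalIntegral.integral_comp_add_right (fun x => x ^ p), zero_add,
    integral_rpow (Or.inl hp), integral_rpow (Or.inl hp), Real.zero_rpow hp0]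
  ring

lemma integral_sq_rpow_add_sub_rpow_le {p t δ : ℝ} (hp : p ∈ Ioc (-1 / 2) 0) (ht : 0 ≤ t)
    (hδ : 0 ≤ δ) :
    ∫ x in Ioc 0 t, ((x + δ) ^ p - x ^ p) ^ 2 ≤ δ ^ (2 * p + 1) / (2 * p + 1) := by
  obtain ⟨hp1, hp2⟩ := hp
  have hq : -1 < 2 * p := by linarith
  calc ∫ x in Ioc 0 t, ((x + δ) ^ p - x ^ p) ^ 2
      ≤ ∫ x in Ioc 0 t, (x ^ (2 * p) - (x + δ) ^ (2 * p)) :=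
        integral_mono_of_nonneg (Filter.Eventually.of_forall fun _ => sq_nonneg _)
          ((intervalIntegral.intervalIntegrable_rpow' hq).sub
            (intervalIntegrable_rpow_add hq δ 0 t)).1
          (ae_restrict_of_forall_mem measurableSet_Ioc fun x hx =>
            sq_rpow_add_sub_rpow_le hp2 hx.1 hδ)
    _ = (t ^ (2 * p + 1) + δ ^ (2 * p + 1) - (t + δ) ^ (2 * p + 1)) / (2 * p + 1) := by
        rw [← intervalIntegral.integral_of_le ht, integral_rpow_sub_rpow_add hq]
    _ ≤ δ ^ (2 * p + 1) / (2 * p + 1) := by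
        have : t ^ (2 * p + 1) ≤ (t + δ) ^ (2 * p + 1) :=
          Real.rpow_le_rpow ht (by linarith) (by linarith)
        gcongr <;> linarith

lemma integral_sq_rpow_div_sub_rpow_div_eq (p G t δ : ℝ) (ht : 0 ≤ t) :
    ∫ s in Ioc 0 t, ((t + δ - s) ^ p / G - (t - s) ^ p / G) ^ 2
      = (∫ x in Ioc 0 t, ((x + δ) ^ p - x ^ p) ^ 2) / G ^ 2 := by
  simp_rw [div_sub_div_same, div_pow, integral_div, add_sub_right_comm t δ]
  rw [← intervalIntegral.integral_of_le ht, ← intervalIntegral.integral_of_le ht,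
    intervalIntegral.integral_comp_sub_left (fun x => ((x + δ) ^ p - x ^ p) ^ 2), sub_self,
    sub_zero]

theorem fractional_kernel_holder_first_variable_general
    (T α : ℝ) (hα : α ∈ Ioc (1 / 2 : ℝ) 1) :
    ∃ κ : ℝ, ∀ δ ∈ Ioo (0 : ℝ) T, ∀ t ∈ Icc (0 : ℝ) T,
      (∫ s in Ioc (0 : ℝ) t,
          ((t + δ - s) ^ (α - 1) / Real.Gamma α - (t - s) ^ (α - 1) / Real.Gamma α) ^ (2 : ℕ))
          ^ ((1 : ℝ) / 2)
        ≤ κ * δ ^ (α - 1 / 2) := by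
  obtain ⟨hα1, hα2⟩ := hα
  have hΓ : 0 < Real.Gamma α := Real.Gamma_pos_of_pos (by linarith)
  have h2α : 0 < 2 * α - 1 := by linarith
  refine ⟨1 / (Real.Gamma α * √(2 * α - 1)), fun δ hδ t ht => ?_⟩
  have hbound := integral_sq_rpow_add_sub_rpow_le (p := α - 1) ⟨by linarith, by linarith⟩ ht.1
    hδ.1.le
  rw [show 2 * (α - 1) + 1 = 2 * α - 1 by ring] at hbound
  have hδpow : (δ ^ (α - 1 / 2)) ^ 2 = δ ^ (2 * α - 1) := by
    rw [← Real.rpow_natCast, ← Real.rpow_mul hδ.1.le]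
    ring_nf
  rw [integral_sq_rpow_div_sub_rpow_div_eq _ _ _ _ ht.1, ← Real.sqrt_eq_rpow, Real.sqrt_le_iff]
  refine ⟨by have := hδ.1; positivity, ?_⟩
  rw [mul_pow, hδpow, div_pow, mul_pow, Real.sq_sqrt h2α.le]
  calc _ ≤ δ ^ (2 * α - 1) / (2 * α - 1) / Real.Gamma α ^ 2 := by gcongr
    _ = _ := by field_simp

/-- Hölder continuity in the first variable of the fractional-kernel integral: for
`K_α(u) = u^{α-1}/Γ(α)` with `α ∈ (1/2, 1]`, there is `κ` such that for all `δ ∈ (0,T)` and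
`t ∈ [0,T]`, `(∫₀ᵗ |K_α(t+δ-s) - K_α(t-s)|² ds)^{1/2} ≤ κ δ^{α-1/2}`. -/
theorem fractional_kernel_holder_first_variable
    (T α : ℝ) (hT : 0 < T) (hα : α ∈ Ioc (1 / 2 : ℝ) 1) :
    ∃ κ : ℝ, ∀ δ ∈ Ioo (0 : ℝ) T, ∀ t ∈ Icc (0 : ℝ) T,
      (∫ s in Ioc (0 : ℝ) t,
          ((t + δ - s) ^ (α - 1) / Real.Gamma α - (t - s) ^ (α - 1) / Real.Gamma α) ^ (2 : ℕ))
          ^ ((1 : ℝ) / 2)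
        ≤ κ * δ ^ (α - 1 / 2) :=
  fractional_kernel_holder_first_variable_general T α hα
end
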